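/- arXiv:1509.06218 — 2 statements merged into one kernel-verified Lean document; each statement's English description precedes it below -/
import Mathlib

section
/- Let smooth functions u, w, η, with p(x,z,t) = g(η(x,t) − z), satisfy the free-surface hydrostatic Euler equations in the fluid domain: ∂_x u + ∂_z w = 0 and ∂_t u + ∂_x(u²) + ∂_z(uw) + ∂_x p = 0 for z_b(x) ≤ z ≤ η(x,t), together with the kinematic conditions ∂_t η + u_s ∂_x η − w_s = 0 at the surface and u_b ∂_x z_b − w_b = 0 at the bottom. Then the total energy is conserved: ∂/∂t ∫_{z_b}^{η} E dz + ∂/∂x ∫_{z_b}^{η} u (E + p) dz = 0, where E = u²/2 + g z. -/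
open MeasureTheory

/-- ∂/∂x of a function of (x,z,t). -/
noncomputable def dX (f : ℝ → ℝ → ℝ → ℝ) (x z t : ℝ) : ℝ := deriv (fun x' => f x' z t) x

/-- ∂/∂z of a function of (x,z,t). -/
noncomputable def dZ (f : ℝ → ℝ → ℝ → ℝ) (x z t : ℝ) : ℝ := deriv (fun z' => f x z' t) z

/-- ∂/∂t of a function of (x,z,t). -/
noncomputable def dT (f : ℝ → ℝ → ℝ → ℝ) (x z t : ℝ) : ℝ := deriv (fun t' => f x z t') t

/-!
Differentiating the two depth integrals by the Leibniz rule leaves boundary terms at `z = η`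
and `z = z_b` plus the depth integral of `u ∂_t u + ∂_x (u (E + p))`. Since `E + p = u²/2 + gη`
does not depend on `z`, the momentum and incompressibility equations turn this integrand into
`-∂_z (w (u²/2 + gη))`, and the boundary values of this vertical flux cancel the other boundary
terms by the two kinematic conditions.
-/

open intervalIntegral Function Set
open scoped ContDiff

section Leibniz

variable {f f' : ℝ → ℝ → ℝ}

theorem hasDerivAt_intervalIntegral_param (hf : Continuous (uncurry f))
    (hf' : Continuous (uncurry f')) (hd : ∀ s z, HasDerivAt (f · z) (f' s z) s)
    (a b s₀ : ℝ) :
    HasDerivAt (fun s => ∫ z in a..b, f s z) (∫ z in a..b, f' s₀ z) s₀ := by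
  obtain ⟨C, hC⟩ :
      ∃ C, ∀ q ∈ Metric.closedBall s₀ 1 ×ˢ uIcc a b, ‖uncurry f' q‖ ≤ C :=
    ((isCompact_closedBall s₀ 1).prod isCompact_uIcc).exists_bound_of_continuousOn
      hf'.continuousOn
  refine (hasDerivAt_integral_of_dominated_loc_of_deriv_le (bound := fun _ => C)
    (Metric.ball_mem_nhds s₀ one_pos) (.of_forall fun s => ?_) ?_ ?_
    (.of_forall fun z hz s hs => hC (s, z) ⟨Metric.ball_subset_closedBall hs,
      uIoc_subset_uIcc hz⟩) intervalIntegrable_const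
    (.of_forall fun z _ s _ => hd s z)).2
  · exact (hf.comp (Continuous.prodMk_right s)).aestronglyMeasurable
  · exact (hf.comp (Continuous.prodMk_right s₀)).intervalIntegrable a b
  · exact (hf'.comp (Continuous.prodMk_right s₀)).aestronglyMeasurable

theorem hasFDerivAt_intervalIntegral_param_upper (hf : Continuous (uncurry f))
    (hf' : Continuous (uncurry f')) (hd : ∀ s z, HasDerivAt (f · z) (f' s z) s) (c : ℝ)
    (q : ℝ × ℝ) :
    HasFDerivAt (fun r : ℝ × ℝ => ∫ z in c..r.2, f r.1 z)
      ((ContinuousLinearMap.toSpanSingleton ℝ (∫ z in c..q.2, f' q.1 z)).coprod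
        (ContinuousLinearMap.toSpanSingleton ℝ (f q.1 q.2))) q := by
  have hslice : ∀ s, Continuous (f s) := fun s => hf.comp (Continuous.prodMk_right s)
  refine (hasStrictFDerivAt_uncurry_coprod (f := fun s y => ∫ z in c..y, f s z)
    (f₁ := fun s y => ContinuousLinearMap.toSpanSingleton ℝ (∫ z in c..y, f' s z))
    (f₂ := fun s y => ContinuousLinearMap.toSpanSingleton ℝ (f s y))
    (.of_forall fun p => hasDerivAt_intervalIntegral_param hf hf' hd c p.2 p.1)
    (.of_forall fun p => ((hslice p.1).integral_hasStrictDerivAt c p.2).hasDerivAt)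
    ?_ ?_).hasFDerivAt
  · exact (ContinuousLinearMap.toSpanSingletonCLE.continuous.comp
      (continuous_parametric_intervalIntegral_of_continuous (f := fun p : ℝ × ℝ => f' p.1)
        (hf'.comp (continuous_fst.fst.prodMk continuous_snd)) continuous_snd)).continuousAt
  · exact (ContinuousLinearMap.toSpanSingletonCLE.continuous.comp hf).continuousAt

theorem hasDerivAt_intervalIntegral_leibniz (hf : Continuous (uncurry f))
    (hf' : Continuous (uncurry f')) (hd : ∀ s z, HasDerivAt (f · z) (f' s z) s)
    {a b : ℝ → ℝ} {a' b' s₀ : ℝ} (ha : HasDerivAt a a' s₀) (hb : HasDerivAt b b' s₀) :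
    HasDerivAt (fun s => ∫ z in a s..b s, f s z)
      (f s₀ (b s₀) * b' - f s₀ (a s₀) * a' + ∫ z in a s₀..b s₀, f' s₀ z) s₀ := by
  have hupper : ∀ {e : ℝ → ℝ} {e' : ℝ}, HasDerivAt e e' s₀ →
      HasDerivAt (fun s => ∫ z in 0..e s, f s z)
        ((∫ z in 0..e s₀, f' s₀ z) + e' * f s₀ (e s₀)) s₀ :=
    fun {e e'} he => by
      simpa [comp_def] using
        (hasFDerivAt_intervalIntegral_param_upper hf hf' hd 0 (s₀, e s₀)).comp_hasDerivAt
          s₀ ((hasDerivAt_id s₀).prodMk he)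
  have hint : ∀ {F : ℝ → ℝ → ℝ}, Continuous (uncurry F) → ∀ s y₁ y₂,
      IntervalIntegrable (F s) volume y₁ y₂ :=
    fun hF s y₁ y₂ => (hF.comp (Continuous.prodMk_right s)).intervalIntegrable y₁ y₂
  refine (((hupper hb).sub (hupper ha)).congr_deriv ?_).congr_of_eventuallyEq
    (.of_forall fun s => ?_)
  · rw [← integral_interval_sub_left (a := 0) (b := b s₀) (c := a s₀)
      (hint hf' _ _ _) (hint hf' _ _ _)]
    ring
  · exact (integral_interval_sub_left (a := 0) (hint hf _ _ _) (hint hf _ _ _)).symm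

end Leibniz

section PartialDerivatives

variable {u : ℝ → ℝ → ℝ → ℝ}

theorem hasDerivAt_dX (hu : ContDiff ℝ 1 ↿u) (x z t : ℝ) :
    HasDerivAt (fun x' => u x' z t) (dX u x z t) x :=
  ((hu.comp (by fun_prop : ContDiff ℝ 1 fun x' : ℝ => (x', z, t))).differentiable
    one_ne_zero x).hasDerivAt

theorem hasDerivAt_dZ (hu : ContDiff ℝ 1 ↿u) (x z t : ℝ) :
    HasDerivAt (fun z' => u x z' t) (dZ u x z t) z :=
  ((hu.comp (by fun_prop : ContDiff ℝ 1 fun z' : ℝ => (x, z', t))).differentiable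
    one_ne_zero z).hasDerivAt

theorem hasDerivAt_dT (hu : ContDiff ℝ 1 ↿u) (x z t : ℝ) :
    HasDerivAt (fun t' => u x z t') (dT u x z t) t :=
  ((hu.comp (by fun_prop : ContDiff ℝ 1 fun t' : ℝ => (x, z, t'))).differentiable
    one_ne_zero t).hasDerivAt

theorem continuous_dX (hu : ContDiff ℝ 1 ↿u) : Continuous ↿(dX u) := by
  suffices ↿(dX u) = fun q => fderiv ℝ ↿u q (1, 0) from
    this ▸ (hu.continuous_fderiv one_ne_zero).clm_apply continuous_const
  funext q
  exact (hasDerivAt_dX hu _ _ _).unique <|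
    (hu.differentiable one_ne_zero q).hasFDerivAt.comp_hasDerivAt
      (f := fun x' : ℝ => (x', q.2)) q.1 ((hasDerivAt_id q.1).prodMk (hasDerivAt_const q.1 q.2))

theorem continuous_dT (hu : ContDiff ℝ 1 ↿u) : Continuous ↿(dT u) := by
  suffices ↿(dT u) = fun q => fderiv ℝ ↿u q (0, 0, 1) from
    this ▸ (hu.continuous_fderiv one_ne_zero).clm_apply continuous_const
  funext q
  exact (hasDerivAt_dT hu _ _ _).unique <|
    (hu.differentiable one_ne_zero q).hasFDerivAt.comp_hasDerivAt
      (f := fun t' : ℝ => (q.1, q.2.1, t')) q.2.2 ((hasDerivAt_const q.2.2 q.1).prodMk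
        ((hasDerivAt_const q.2.2 q.2.1).prodMk (hasDerivAt_id q.2.2)))

end PartialDerivatives

section HydrostaticEnergy

variable (g : ℝ) {zb : ℝ → ℝ} {η : ℝ → ℝ → ℝ} {u w : ℝ → ℝ → ℝ → ℝ}

theorem hasDerivAt_depthIntegral_energy (hu : ContDiff ℝ 1 ↿u) {x t : ℝ}
    (hηt : DifferentiableAt ℝ (η x ·) t) :
    HasDerivAt (fun t' => ∫ z in zb x..η x t', (u x z t' ^ 2 / 2 + g * z))
      ((u x (η x t) t ^ 2 / 2 + g * η x t) * deriv (η x ·) t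
        + ∫ z in zb x..η x t, u x z t * dT u x z t) t := by
  have hcu : Continuous fun q : ℝ × ℝ => u x q.2 q.1 :=
    hu.continuous.comp (f := fun q : ℝ × ℝ => (x, q.2, q.1)) (by fun_prop)
  have hcuT : Continuous fun q : ℝ × ℝ => dT u x q.2 q.1 :=
    (continuous_dT hu).comp (f := fun q : ℝ × ℝ => (x, q.2, q.1)) (by fun_prop)
  have := hasDerivAt_intervalIntegral_leibniz (f := fun s z => u x z s ^ 2 / 2 + g * z)
    (f' := fun s z => u x z s * dT u x z s) (by fun_prop) (by fun_prop)
    (fun s z => ?_) (hasDerivAt_const t (zb x)) hηt.hasDerivAt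
  · simpa using this
  · have hut := hasDerivAt_dT hu x z s
    refine (((hut.fun_pow 2).div_const 2).add_const (g * z)).congr_deriv ?_
    push_cast
    ring

theorem hasDerivAt_depthIntegral_energyFlux (hu : ContDiff ℝ 1 ↿u) {x t : ℝ}
    (hη : ContDiff ℝ 1 (η · t)) (hzb : DifferentiableAt ℝ zb x) :
    HasDerivAt (fun x' => ∫ z in zb x'..η x' t, u x' z t * (u x' z t ^ 2 / 2 + g * η x' t))
      (u x (η x t) t * (u x (η x t) t ^ 2 / 2 + g * η x t) * deriv (η · t) x
        - u x (zb x) t * (u x (zb x) t ^ 2 / 2 + g * η x t) * deriv zb x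
        + ∫ z in zb x..η x t,
            ((3 / 2 * u x z t ^ 2 + g * η x t) * dX u x z t + g * u x z t * deriv (η · t) x)) x := by
  have hcu : Continuous fun q : ℝ × ℝ => u q.1 q.2 t :=
    hu.continuous.comp (f := fun q : ℝ × ℝ => (q.1, q.2, t)) (by fun_prop)
  have hcuX : Continuous fun q : ℝ × ℝ => dX u q.1 q.2 t :=
    (continuous_dX hu).comp (f := fun q : ℝ × ℝ => (q.1, q.2, t)) (by fun_prop)
  have hcη := hη.continuous
  have hcηX := hη.continuous_deriv le_rfl
  have := hasDerivAt_intervalIntegral_leibniz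
    (f := fun y z => u y z t * (u y z t ^ 2 / 2 + g * η y t))
    (f' := fun y z =>
      (3 / 2 * u y z t ^ 2 + g * η y t) * dX u y z t + g * u y z t * deriv (η · t) y)
    (by fun_prop) (by fun_prop) (fun y z => ?_) hzb.hasDerivAt
    (hη.differentiable one_ne_zero x).hasDerivAt
  · simpa using this
  · have hux := hasDerivAt_dX hu y z t
    refine (hux.fun_mul (((hux.fun_pow 2).div_const 2).fun_add
      ((hη.differentiable one_ne_zero y).hasDerivAt.const_mul g))).congr_deriv ?_
    push_cast
    ring

theorem hasDerivAt_verticalEnergyFlux (hu : ContDiff ℝ 1 ↿u) (hw : ContDiff ℝ 1 ↿w)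
    {x z t : ℝ} (c ηx : ℝ) (hinc : dX u x z t + dZ w x z t = 0)
    (hmom : dT u x z t + dX (fun x' z' t' => u x' z' t' ^ 2) x z t
      + dZ (fun x' z' t' => u x' z' t' * w x' z' t') x z t + g * ηx = 0) :
    HasDerivAt (fun ζ => u x ζ t ^ 2 * w x ζ t / 2 + g * c * w x ζ t)
      (-(u x z t * dT u x z t
        + ((3 / 2 * u x z t ^ 2 + g * c) * dX u x z t + g * u x z t * ηx))) z := by
  have huz := hasDerivAt_dZ hu x z t
  have hwz := hasDerivAt_dZ hw x z t
  rw [dX, ((hasDerivAt_dX hu x z t).fun_pow 2).deriv, dZ, (huz.fun_mul hwz).deriv] at hmom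
  refine ((((huz.fun_pow 2).fun_mul hwz).div_const 2).fun_add
    (hwz.const_mul (g * c))).congr_deriv ?_
  push_cast at hmom ⊢
  linear_combination u x z t * hmom + (g * c - u x z t ^ 2 / 2) * hinc

theorem integral_energy_balance (hu : ContDiff ℝ 1 ↿u) (hw : ContDiff ℝ 1 ↿w)
    {p : ℝ → ℝ → ℝ → ℝ} {x t : ℝ} (hp : ∀ x' z, p x' z t = g * (η x' t - z))
    (hηx : DifferentiableAt ℝ (η · t) x) (hle : zb x ≤ η x t)
    (hincomp : ∀ z ∈ Icc (zb x) (η x t), dX u x z t + dZ w x z t = 0)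
    (hmom : ∀ z ∈ Icc (zb x) (η x t), dT u x z t + dX (fun x' z' t' => u x' z' t' ^ 2) x z t
      + dZ (fun x' z' t' => u x' z' t' * w x' z' t') x z t + dX p x z t = 0) :
    (∫ z in zb x..η x t, u x z t * dT u x z t)
      + (∫ z in zb x..η x t,
          ((3 / 2 * u x z t ^ 2 + g * η x t) * dX u x z t + g * u x z t * deriv (η · t) x))
      = (u x (zb x) t ^ 2 * w x (zb x) t / 2 + g * η x t * w x (zb x) t)
        - (u x (η x t) t ^ 2 * w x (η x t) t / 2 + g * η x t * w x (η x t) t) := by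
  have hpx : ∀ z, dX p x z t = g * deriv (η · t) x := fun z => by
    simp only [dX, hp]
    exact ((hηx.hasDerivAt.sub_const z).const_mul g).deriv
  have hcu : Continuous fun z => u x z t :=
    hu.continuous.comp (f := fun z => (x, z, t)) (by fun_prop)
  have hcuT : Continuous fun z => dT u x z t :=
    (continuous_dT hu).comp (f := fun z => (x, z, t)) (by fun_prop)
  have hcuX : Continuous fun z => dX u x z t :=
    (continuous_dX hu).comp (f := fun z => (x, z, t)) (by fun_prop)
  have hFTC := integral_eq_sub_of_hasDerivAt
    (f := fun ζ => -(u x ζ t ^ 2 * w x ζ t / 2 + g * η x t * w x ζ t)) (a := zb x) (b := η x t)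
    (f' := fun z => u x z t * dT u x z t
      + ((3 / 2 * u x z t ^ 2 + g * η x t) * dX u x z t + g * u x z t * deriv (η · t) x))
    (fun z hz => ?_) (Continuous.intervalIntegrable (by fun_prop) _ _)
  · rw [intervalIntegral.integral_add] at hFTC
    · linear_combination hFTC
    all_goals exact Continuous.intervalIntegrable (by fun_prop) _ _
  · rw [uIcc_of_le hle] at hz
    have := hmom z hz
    rw [hpx] at this
    simpa using (hasDerivAt_verticalEnergyFlux g hu hw (η x t) _ (hincomp z hz) this).fun_neg

end HydrostaticEnergy

theorem stmt2_general (g : ℝ)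
    (zb : ℝ → ℝ) (H : ℝ → ℝ → ℝ)
    (hzb : ContDiff ℝ (⊤ : ℕ∞) zb)
    (hH : ContDiff ℝ (⊤ : ℕ∞) (fun q : ℝ × ℝ => H q.1 q.2))
    (hHpos : ∀ x t : ℝ, 0 < H x t)
    (η : ℝ → ℝ → ℝ) (hη : ∀ x t : ℝ, η x t = zb x + H x t)
    (u w p : ℝ → ℝ → ℝ → ℝ)
    (hu : ContDiff ℝ (⊤ : ℕ∞) (fun q : ℝ × ℝ × ℝ => u q.1 q.2.1 q.2.2))
    (hw : ContDiff ℝ (⊤ : ℕ∞) (fun q : ℝ × ℝ × ℝ => w q.1 q.2.1 q.2.2))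
    (hp : ∀ x z t : ℝ, p x z t = g * (η x t - z))
    (hincomp : ∀ x t : ℝ, ∀ z ∈ Set.Icc (zb x) (η x t),
      dX u x z t + dZ w x z t = 0)
    (hmom : ∀ x t : ℝ, ∀ z ∈ Set.Icc (zb x) (η x t),
      dT u x z t + dX (fun x' z' t' => (u x' z' t') ^ 2) x z t
        + dZ (fun x' z' t' => u x' z' t' * w x' z' t') x z t + dX p x z t = 0)
    (hkin_s : ∀ x t : ℝ,
      deriv (fun t' => η x t') t
        + u x (η x t) t * deriv (fun x' => η x' t) x - w x (η x t) t = 0)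
    (hkin_b : ∀ x t : ℝ, u x (zb x) t * deriv zb x - w x (zb x) t = 0) :
    ∀ x t : ℝ,
      deriv (fun t' => ∫ z in (zb x)..(η x t'), ((u x z t') ^ 2 / 2 + g * z)) t
        + deriv (fun x' => ∫ z in (zb x')..(η x' t),
            u x' z t * (((u x' z t) ^ 2 / 2 + g * z) + p x' z t)) x = 0 := by
  intro x t
  have hu₁ : ContDiff ℝ 1 ↿u := hu.of_le (by simp)
  have hηx : ContDiff ℝ 1 (η · t) := by
    simp only [hη]
    exact (hzb.add (hH.comp (f := fun x' => (x', t)) (by fun_prop))).of_le (by simp)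
  have hηt : Differentiable ℝ (η x ·) := by
    simp only [hη]
    exact (contDiff_const.add (hH.comp (f := fun t' => (x, t')) (by fun_prop))).differentiable
      (by simp)
  have hle : zb x ≤ η x t := by linarith [hη x t, hHpos x t]
  have hflux : ∀ x' z, u x' z t * ((u x' z t ^ 2 / 2 + g * z) + p x' z t)
      = u x' z t * (u x' z t ^ 2 / 2 + g * η x' t) := fun x' z => by rw [hp]; ring
  simp_rw [hflux]
  rw [(hasDerivAt_depthIntegral_energy g hu₁ (hηt t)).deriv,
    (hasDerivAt_depthIntegral_energyFlux g hu₁ hηx (hzb.differentiable (by simp) x)).deriv]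
  linear_combination integral_energy_balance g hu₁ (hw.of_le (by simp)) (fun x' z => hp x' z t)
      (hηx.differentiable one_ne_zero x) hle (hincomp x t) (hmom x t)
    + (u x (η x t) t ^ 2 / 2 + g * η x t) * hkin_s x t
    - (u x (zb x) t ^ 2 / 2 + g * η x t) * hkin_b x t

/-- smooth solutions of the free-surface hydrostatic Euler equations with
`p = g(η−z)` conserve the total energy:
`∂_t ∫_{z_b}^η E dz + ∂_x ∫_{z_b}^η u(E+p) dz = 0`, where `E = u²/2 + gz`. -/
theorem stmt2 (g : ℝ) (hg : 0 < g)
    (zb : ℝ → ℝ) (H : ℝ → ℝ → ℝ)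
    (hzb : ContDiff ℝ (⊤ : ℕ∞) zb)
    (hH : ContDiff ℝ (⊤ : ℕ∞) (fun q : ℝ × ℝ => H q.1 q.2))
    (hHpos : ∀ x t : ℝ, 0 < H x t)
    (η : ℝ → ℝ → ℝ) (hη : ∀ x t : ℝ, η x t = zb x + H x t)
    (u w p : ℝ → ℝ → ℝ → ℝ)
    (hu : ContDiff ℝ (⊤ : ℕ∞) (fun q : ℝ × ℝ × ℝ => u q.1 q.2.1 q.2.2))
    (hw : ContDiff ℝ (⊤ : ℕ∞) (fun q : ℝ × ℝ × ℝ => w q.1 q.2.1 q.2.2))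
    (hp : ∀ x z t : ℝ, p x z t = g * (η x t - z))
    (hincomp : ∀ x t : ℝ, ∀ z ∈ Set.Icc (zb x) (η x t),
      dX u x z t + dZ w x z t = 0)
    (hmom : ∀ x t : ℝ, ∀ z ∈ Set.Icc (zb x) (η x t),
      dT u x z t + dX (fun x' z' t' => (u x' z' t') ^ 2) x z t
        + dZ (fun x' z' t' => u x' z' t' * w x' z' t') x z t + dX p x z t = 0)
    (hkin_s : ∀ x t : ℝ,
      deriv (fun t' => η x t') t
        + u x (η x t) t * deriv (fun x' => η x' t) x - w x (η x t) t = 0)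
    (hkin_b : ∀ x t : ℝ, u x (zb x) t * deriv zb x - w x (zb x) t = 0) :
    ∀ x t : ℝ,
      deriv (fun t' => ∫ z in (zb x)..(η x t'), ((u x z t') ^ 2 / 2 + g * z)) t
        + deriv (fun x' => ∫ z in (zb x')..(η x' t),
            u x' z t * (((u x' z t) ^ 2 / 2 + g * z) + p x' z t)) x = 0 :=
  stmt2_general g zb H hzb hH hHpos η hη u w p hu hw hp hincomp hmom hkin_s hkin_b
end

section
/- With ŵ(x,z,t) = − ∂/∂x ∫_{z_b(x)}^{z} u^N(x,z′,t) dz′ as in the context, for each layer α one has ∫_{z_{α−1/2}}^{z_{α+1/2}} ŵ dz = h_α ( k_α − z_α ∂_x u_α ) = − (h_α/2) ∂_x(h_α u_α) − h_α Σ_{j=1}^{α−1} ∂_x(h_j u_j) + h_α u_α ∂_x z_α = h_α w_α, i.e. the layer integral of ŵ equals h_α times the layer vertical velocity w_α := −(1/2)∂_x(h_α u_α) − Σ_{j=1}^{α−1} ∂_x(h_j u_j) + u_α ∂_x z_α. -/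
/-!
On the layer `z_{α-1/2} < z < z_{α+1/2}` the interfaces depend continuously on `x`, so for all
nearby `x'` the primitive `∫_{z_b}^z u^N` equals `Σ_{j<α} h_j u_j + (z - z_{α-1/2}) u_α`.
Differentiating gives `ŵ = k_α - z ∂_x u_α` there, once the recursion for `k` is telescoped to
`k_α = ∂_x(z_{α-1/2} u_α) - Σ_{j<α} ∂_x(h_j u_j)`. Integrating this affine function of `z` over
the layer gives `h_α (k_α - z_α ∂_x u_α)`, and `z_{α-1/2} = z_α - h_α/2` turns it into the other
two forms.
-/

open MeasureTheory

/-- ∂/∂x of a function of (x,t). -/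
noncomputable def pdx (f : ℝ → ℝ → ℝ) (x t : ℝ) : ℝ := deriv (fun x' => f x' t) x

/-- Interface heights `z_{α+1/2} = z_b + Σ_{j=1}^α l_j H`. -/
noncomputable def zhalf (zb : ℝ → ℝ) (H : ℝ → ℝ → ℝ) (l : ℕ → ℝ) (α : ℕ) (x t : ℝ) : ℝ :=
  zb x + ∑ j ∈ Finset.Icc 1 α, l j * H x t

/-- Layer midpoints `z_α = (z_{α+1/2} + z_{α−1/2})/2`. -/
noncomputable def zc (zb : ℝ → ℝ) (H : ℝ → ℝ → ℝ) (l : ℕ → ℝ) (α : ℕ) (x t : ℝ) : ℝ :=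
  (zhalf zb H l α x t + zhalf zb H l (α - 1) x t) / 2

/-- The piecewise constant vertical velocity profile `u^N`. -/
noncomputable def uN (zb : ℝ → ℝ) (H : ℝ → ℝ → ℝ) (l : ℕ → ℝ) (u : ℕ → ℝ → ℝ → ℝ)
    (N : ℕ) (x z t : ℝ) : ℝ :=
  ∑ α ∈ Finset.Icc 1 N,
    Set.indicator (Set.Ioo (zhalf zb H l (α - 1) x t) (zhalf zb H l α x t))
      (fun _ => u α x t) z

/-- `ŵ(x,z,t) = −∂_x ∫_{z_b(x)}^z u^N(x,z′,t) dz′`. -/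
noncomputable def what (zb : ℝ → ℝ) (H : ℝ → ℝ → ℝ) (l : ℕ → ℝ) (u : ℕ → ℝ → ℝ → ℝ)
    (N : ℕ) (x z t : ℝ) : ℝ :=
  -deriv (fun x' => ∫ z' in (zb x')..z, uN zb H l u N x' z' t) x

/-- The recursively defined functions `k_α`. -/
noncomputable def kf (zb : ℝ → ℝ) (H : ℝ → ℝ → ℝ) (l : ℕ → ℝ) (u : ℕ → ℝ → ℝ → ℝ) :
    ℕ → ℝ → ℝ → ℝ
  | 0, _, _ => 0
  | 1, x, t => deriv (fun x' => zb x' * u 1 x' t) x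
  | α + 2, x, t => kf zb H l u (α + 1) x t
      + deriv (fun x' => zhalf zb H l (α + 1) x' t * (u (α + 2) x' t - u (α + 1) x' t)) x

open Set in
theorem intervalIntegral_indicator_Ioo_const {a b p q : ℝ} (c : ℝ) (hab : a ≤ b) (hap : a ≤ p)
    (hpq : p ≤ q) :
    ∫ z in a..b, (Ioo p q).indicator (fun _ => c) z = c * (min b q - min b p) := by
  have hae : volume.real (Ioo p q ∩ Ioc a b) = volume.real (Ioc p q ∩ Ioc a b) :=
    measureReal_congr (Ioo_ae_eq_Ioc.inter (ae_eq_refl _))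
  rw [intervalIntegral.integral_of_le hab, integral_indicator_const _ measurableSet_Ioo,
    measureReal_restrict_apply measurableSet_Ioo, hae, Ioc_inter_Ioc, min_comm q b,
    Real.volume_real_Ioc, smul_eq_mul, mul_comm, max_eq_left hap]
  rcases le_total p b with hpb | hbp
  · rw [min_eq_right hpb, max_eq_left (by simp [hpq, hpb])]
  · rw [min_eq_left hbp, min_eq_left (hbp.trans hpq), max_eq_right (by simp [hbp])]; ring

theorem sum_mul_min_sub_min {N β : ℕ} {Z : ℕ → ℝ} (c : ℕ → ℝ) (hZ : MonotoneOn Z (Set.Iic N))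
    (hβ : β < N) {z : ℝ} (hz₁ : Z β ≤ z) (hz₂ : z ≤ Z (β + 1)) :
    ∑ j ∈ Finset.Icc 1 N, c j * (min z (Z j) - min z (Z (j - 1)))
      = ∑ j ∈ Finset.Icc 1 β, c j * (Z j - Z (j - 1)) + c (β + 1) * (z - Z β) := by
  have hZ' : ∀ i j, i ≤ j → j ≤ N → Z i ≤ Z j := fun i j hij hj =>
    hZ (Set.mem_Iic.2 (hij.trans hj)) (Set.mem_Iic.2 hj) hij
  have hzero : ∀ j ∈ Finset.Icc 1 N, j ∉ Finset.Icc 1 (β + 1) →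
      c j * (min z (Z j) - min z (Z (j - 1))) = 0 := by
    intro j hj hj'
    simp only [Finset.mem_Icc] at hj hj'
    have hz : z ≤ Z (j - 1) := hz₂.trans (hZ' _ _ (by omega) (by omega))
    rw [min_eq_left (hz.trans (hZ' _ _ (by omega) hj.2)), min_eq_left hz, sub_self, mul_zero]
  rw [← Finset.sum_subset (Finset.Icc_subset_Icc_right hβ) hzero,
    Finset.sum_Icc_succ_top (by omega), Nat.add_sub_cancel, min_eq_left hz₂, min_eq_right hz₁]
  congr 1
  refine Finset.sum_congr rfl fun j hj => ?_
  rw [Finset.mem_Icc] at hj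
  rw [min_eq_right ((hZ' _ _ hj.2 (by omega)).trans hz₁),
    min_eq_right ((hZ' _ _ (by omega) (by omega)).trans hz₁)]

theorem integral_sum_indicator_Ioo {N : ℕ} {Z : ℕ → ℝ} (c : ℕ → ℝ)
    (hZ : MonotoneOn Z (Set.Iic N)) {z : ℝ} (hz : Z 0 ≤ z) :
    ∫ z' in Z 0..z, ∑ j ∈ Finset.Icc 1 N, (Set.Ioo (Z (j - 1)) (Z j)).indicator (fun _ => c j) z'
      = ∑ j ∈ Finset.Icc 1 N, c j * (min z (Z j) - min z (Z (j - 1))) := by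
  rw [intervalIntegral.integral_finsetSum fun j _ =>
    ((integrable_indicator_iff measurableSet_Ioo).2
      (integrableOn_const measure_Ioo_lt_top.ne)).intervalIntegrable]
  refine Finset.sum_congr rfl fun j hj => ?_
  rw [Finset.mem_Icc] at hj
  exact intervalIntegral_indicator_Ioo_const _ hz
    (hZ (by simp) (by simp; omega) (Nat.zero_le _))
    (hZ (by simp; omega) (by simp; omega) (by omega))

theorem intervalIntegral_sub_mul_id (a b A B : ℝ) :
    ∫ z in a..b, (A - z * B) = (b - a) * (A - (a + b) / 2 * B) := by
  rw [intervalIntegral.integral_sub intervalIntegrable_const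
      (intervalIntegral.intervalIntegrable_id.mul_const B),
    intervalIntegral.integral_const, intervalIntegral.integral_mul_const, integral_id, smul_eq_mul]
  ring

section Layers

variable {zb : ℝ → ℝ} {H : ℝ → ℝ → ℝ} {l : ℕ → ℝ} {u : ℕ → ℝ → ℝ → ℝ} {t : ℝ}

theorem zhalf_zero (x : ℝ) : zhalf zb H l 0 x t = zb x := by
  simp [zhalf]

theorem zhalf_succ (j : ℕ) (x : ℝ) :
    zhalf zb H l (j + 1) x t = zhalf zb H l j x t + l (j + 1) * H x t := by
  rw [zhalf, zhalf, Finset.sum_Icc_succ_top (by omega), add_assoc]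

theorem zc_succ (j : ℕ) (x : ℝ) :
    zc zb H l (j + 1) x t = zhalf zb H l j x t + l (j + 1) * H x t / 2 := by
  rw [zc, Nat.add_sub_cancel, zhalf_succ]
  ring

theorem monotoneOn_zhalf {N : ℕ} (hl : ∀ j ∈ Finset.Icc 1 N, 0 ≤ l j) {x : ℝ}
    (hH : 0 ≤ H x t) : MonotoneOn (fun j => zhalf zb H l j x t) (Set.Iic N) := by
  intro i _ j hj hij
  refine add_le_add le_rfl (Finset.sum_le_sum_of_subset_of_nonneg
    (Finset.Icc_subset_Icc_right hij) fun k hk _ => mul_nonneg (hl k ?_) hH)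
  exact Finset.Icc_subset_Icc_right hj hk

theorem differentiable_zhalf (hzb : Differentiable ℝ zb) (hH : Differentiable ℝ (fun x => H x t))
    (j : ℕ) : Differentiable ℝ (fun x => zhalf zb H l j x t) := by
  unfold zhalf
  fun_prop

theorem differentiable_zc (hzb : Differentiable ℝ zb) (hH : Differentiable ℝ (fun x => H x t))
    (j : ℕ) : Differentiable ℝ (fun x => zc zb H l j x t) := by
  unfold zc
  have := differentiable_zhalf (l := l) hzb hH
  fun_prop

theorem kf_succ (hzb : Differentiable ℝ zb) (hH : Differentiable ℝ (fun x => H x t))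
    (hu : ∀ j, Differentiable ℝ (fun x => u j x t)) (γ : ℕ) (x : ℝ) :
    kf zb H l u (γ + 1) x t
      = pdx (fun x' t' => zhalf zb H l γ x' t' * u (γ + 1) x' t') x t
        - ∑ j ∈ Finset.Icc 1 γ, pdx (fun x' t' => l j * H x' t' * u j x' t') x t := by
  have hZ := differentiable_zhalf (l := l) hzb hH
  induction γ with
  | zero => simp [kf, pdx, zhalf_zero]
  | succ γ ih =>
    have hsplit : (fun x' => zhalf zb H l (γ + 1) x' t * u (γ + 1 + 1) x' t)
        = fun x' => zhalf zb H l γ x' t * u (γ + 1) x' t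
          + zhalf zb H l (γ + 1) x' t * (u (γ + 2) x' t - u (γ + 1) x' t)
          + l (γ + 1) * H x' t * u (γ + 1) x' t := by
      funext x'
      rw [zhalf_succ γ x']
      ring
    change kf zb H l u (γ + 1) x t
      + deriv (fun x' => zhalf zb H l (γ + 1) x' t * (u (γ + 2) x' t - u (γ + 1) x' t)) x = _
    simp only [ih, Finset.sum_Icc_succ_top (by omega : 1 ≤ γ + 1), pdx]
    rw [hsplit, deriv_fun_add (by fun_prop) (by fun_prop),
      deriv_fun_add (by fun_prop) (by fun_prop)]
    ring

theorem integral_uN_of_mem_layer {N β : ℕ} (hl : ∀ j ∈ Finset.Icc 1 N, 0 ≤ l j) {x z : ℝ}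
    (hH : 0 ≤ H x t) (hβ : β < N) (hz₁ : zhalf zb H l β x t ≤ z)
    (hz₂ : z ≤ zhalf zb H l (β + 1) x t) :
    ∫ z' in zb x..z, uN zb H l u N x z' t
      = ∑ j ∈ Finset.Icc 1 β, l j * H x t * u j x t
        + u (β + 1) x t * (z - zhalf zb H l β x t) := by
  have hmono := monotoneOn_zhalf (zb := zb) hl hH
  -- With `zb x = Z 0`, `uN` is definitionally the layer sum for `Z j = zhalf zb H l j x t`.
  rw [← zhalf_zero (zb := zb) (l := l) (H := H) (t := t) x]
  refine (integral_sum_indicator_Ioo (fun j => u j x t) hmono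
    ((hmono (by simp) (by simp; omega) (Nat.zero_le β)).trans hz₁)).trans ?_
  rw [sum_mul_min_sub_min _ hmono hβ hz₁ hz₂]
  congr 1
  refine Finset.sum_congr rfl fun j hj => ?_
  obtain ⟨i, rfl⟩ : ∃ i, j = i + 1 := ⟨j - 1, by grind⟩
  simp only [Nat.add_sub_cancel, zhalf_succ i x]
  ring

theorem what_eq_kf_sub_mul {N β : ℕ} (hzb : Differentiable ℝ zb)
    (hH : Differentiable ℝ (fun x => H x t)) (hu : ∀ j, Differentiable ℝ (fun x => u j x t))
    (hl : ∀ j ∈ Finset.Icc 1 N, 0 ≤ l j) (hHnn : ∀ x, 0 ≤ H x t) (hβ : β < N) {x z : ℝ}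
    (hz : z ∈ Set.Ioo (zhalf zb H l β x t) (zhalf zb H l (β + 1) x t)) :
    what zb H l u N x z t = kf zb H l u (β + 1) x t - z * pdx (u (β + 1)) x t := by
  have hZ := differentiable_zhalf (l := l) hzb hH
  have hlocal : (fun x' => ∫ z' in zb x'..z, uN zb H l u N x' z' t)
      =ᶠ[nhds x] fun x' => ∑ j ∈ Finset.Icc 1 β, l j * H x' t * u j x' t
        + u (β + 1) x' t * (z - zhalf zb H l β x' t) := by
    filter_upwards [(hZ β).continuous.continuousAt.eventually_lt continuousAt_const hz.1,
      continuousAt_const.eventually_lt (hZ (β + 1)).continuous.continuousAt hz.2] with x' h₁ h₂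
    exact integral_uN_of_mem_layer hl (hHnn x') hβ h₁.le h₂.le
  rw [what, hlocal.deriv_eq, deriv_fun_add (by fun_prop) (by fun_prop),
    deriv_fun_sum fun j _ => by fun_prop, deriv_fun_mul (by fun_prop) (by fun_prop),
    deriv_const_sub, kf_succ hzb hH hu, pdx, deriv_fun_mul (by fun_prop) (by fun_prop)]
  simp only [pdx]
  ring

theorem integral_what_layer {N β : ℕ} (hzb : Differentiable ℝ zb)
    (hH : Differentiable ℝ (fun x => H x t)) (hu : ∀ j, Differentiable ℝ (fun x => u j x t))
    (hl : ∀ j ∈ Finset.Icc 1 N, 0 ≤ l j) (hHnn : ∀ x, 0 ≤ H x t) (hβ : β < N) (x : ℝ) :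
    ∫ z in zhalf zb H l β x t..zhalf zb H l (β + 1) x t, what zb H l u N x z t
      = l (β + 1) * H x t
        * (kf zb H l u (β + 1) x t - zc zb H l (β + 1) x t * pdx (u (β + 1)) x t) := by
  have hle : zhalf zb H l β x t ≤ zhalf zb H l (β + 1) x t :=
    monotoneOn_zhalf hl (hHnn x) (Set.mem_Iic.2 hβ.le) (Set.mem_Iic.2 hβ) β.le_succ
  rw [intervalIntegral.integral_congr_Ioo_of_le hle
    fun z hz => what_eq_kf_sub_mul hzb hH hu hl hHnn hβ hz, intervalIntegral_sub_mul_id,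
    zc_succ, zhalf_succ]
  ring

theorem pdx_zhalf_mul_eq (hzb : Differentiable ℝ zb) (hH : Differentiable ℝ (fun x => H x t))
    (hu : ∀ j, Differentiable ℝ (fun x => u j x t)) (β : ℕ) (x : ℝ) :
    pdx (fun x' t' => zhalf zb H l β x' t' * u (β + 1) x' t') x t
      = pdx (zc zb H l (β + 1)) x t * u (β + 1) x t + zc zb H l (β + 1) x t * pdx (u (β + 1)) x t
        - pdx (fun x' t' => l (β + 1) * H x' t' * u (β + 1) x' t') x t / 2 := by
  have hzc := differentiable_zc (l := l) hzb hH
  have hsplit : (fun x' => zhalf zb H l β x' t * u (β + 1) x' t)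
      = fun x' => zc zb H l (β + 1) x' t * u (β + 1) x' t
        - l (β + 1) * H x' t * u (β + 1) x' t / 2 := by
    funext x'
    rw [zc_succ]
    ring
  simp only [pdx]
  rw [hsplit, deriv_fun_sub (by fun_prop) (by fun_prop), deriv_div_const,
    deriv_fun_mul (by fun_prop) (by fun_prop)]

end Layers

theorem stmt12_general (N : ℕ) (l : ℕ → ℝ)
    (hl : ∀ j ∈ Finset.Icc 1 N, 0 < l j)
    (zb : ℝ → ℝ) (H : ℝ → ℝ → ℝ)
    (hzb : ContDiff ℝ (⊤ : ℕ∞) zb)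
    (hH : ContDiff ℝ (⊤ : ℕ∞) (fun q : ℝ × ℝ => H q.1 q.2))
    (hHpos : ∀ x t : ℝ, 0 < H x t)
    (u : ℕ → ℝ → ℝ → ℝ)
    (hu : ∀ α, ContDiff ℝ (⊤ : ℕ∞) (fun q : ℝ × ℝ => u α q.1 q.2)) :
    ∀ α ∈ Finset.Icc 1 N, ∀ x t : ℝ,
      (∫ z in (zhalf zb H l (α - 1) x t)..(zhalf zb H l α x t), what zb H l u N x z t)
          = l α * H x t * (kf zb H l u α x t
              - zc zb H l α x t * deriv (fun x' => u α x' t) x)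
      ∧ (∫ z in (zhalf zb H l (α - 1) x t)..(zhalf zb H l α x t), what zb H l u N x z t)
          = -(l α * H x t / 2) * pdx (fun x' t' => l α * H x' t' * u α x' t') x t
            - l α * H x t
                * ∑ j ∈ Finset.Icc 1 (α - 1), pdx (fun x' t' => l j * H x' t' * u j x' t') x t
            + l α * H x t * u α x t * pdx (zc zb H l α) x t
      ∧ (∫ z in (zhalf zb H l (α - 1) x t)..(zhalf zb H l α x t), what zb H l u N x z t)
          = l α * H x t
              * (-(1 / 2) * pdx (fun x' t' => l α * H x' t' * u α x' t') x t
                - (∑ j ∈ Finset.Icc 1 (α - 1),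
                    pdx (fun x' t' => l j * H x' t' * u j x' t') x t)
                + u α x t * pdx (zc zb H l α) x t) := by
  intro α hα x t
  obtain ⟨β, rfl⟩ : ∃ β, α = β + 1 := ⟨α - 1, by grind⟩
  have hβ : β < N := by grind
  have hslice : ContDiff ℝ (⊤ : ℕ∞) fun x : ℝ => (x, t) := contDiff_id.prodMk contDiff_const
  have hzb' : Differentiable ℝ zb := hzb.differentiable (by simp)
  have hH' : Differentiable ℝ (fun x => H x t) := (hH.comp hslice).differentiable (by simp)
  have hu' : ∀ j, Differentiable ℝ (fun x => u j x t) :=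
    fun j => ((hu j).comp hslice).differentiable (by simp)
  have hlayer := integral_what_layer hzb' hH' hu' (fun j hj => (hl j hj).le)
    (fun x => (hHpos x t).le) hβ x
  have hk := kf_succ (l := l) hzb' hH' hu' β x
  have hprod := pdx_zhalf_mul_eq (l := l) hzb' hH' hu' β x
  simp only [Nat.add_sub_cancel, pdx] at hlayer hk hprod ⊢
  refine ⟨hlayer, ?_, ?_⟩ <;> linear_combination hlayer + l (β + 1) * H x t * (hk + hprod)

/-- the layer integral of `ŵ` equals `h_α(k_α − z_α ∂_x u_α)`, which equals
`−(h_α/2)∂_x(h_α u_α) − h_α Σ_{j<α} ∂_x(h_j u_j) + h_α u_α ∂_x z_α = h_α w_α`. -/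
theorem stmt12 (N : ℕ) (hN : 1 ≤ N) (l : ℕ → ℝ)
    (hl : ∀ j ∈ Finset.Icc 1 N, 0 < l j) (hlsum : ∑ j ∈ Finset.Icc 1 N, l j = 1)
    (zb : ℝ → ℝ) (H : ℝ → ℝ → ℝ)
    (hzb : ContDiff ℝ (⊤ : ℕ∞) zb)
    (hH : ContDiff ℝ (⊤ : ℕ∞) (fun q : ℝ × ℝ => H q.1 q.2))
    (hHpos : ∀ x t : ℝ, 0 < H x t)
    (u : ℕ → ℝ → ℝ → ℝ)
    (hu : ∀ α, ContDiff ℝ (⊤ : ℕ∞) (fun q : ℝ × ℝ => u α q.1 q.2)) :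
    ∀ α ∈ Finset.Icc 1 N, ∀ x t : ℝ,
      (∫ z in (zhalf zb H l (α - 1) x t)..(zhalf zb H l α x t), what zb H l u N x z t)
          = l α * H x t * (kf zb H l u α x t
              - zc zb H l α x t * deriv (fun x' => u α x' t) x)
      ∧ (∫ z in (zhalf zb H l (α - 1) x t)..(zhalf zb H l α x t), what zb H l u N x z t)
          = -(l α * H x t / 2) * pdx (fun x' t' => l α * H x' t' * u α x' t') x t
            - l α * H x t
                * ∑ j ∈ Finset.Icc 1 (α - 1), pdx (fun x' t' => l j * H x' t' * u j x' t') x t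
            + l α * H x t * u α x t * pdx (zc zb H l α) x t
      ∧ (∫ z in (zhalf zb H l (α - 1) x t)..(zhalf zb H l α x t), what zb H l u N x z t)
          = l α * H x t
              * (-(1 / 2) * pdx (fun x' t' => l α * H x' t' * u α x' t') x t
                - (∑ j ∈ Finset.Icc 1 (α - 1),
                    pdx (fun x' t' => l j * H x' t' * u j x' t') x t)
                + u α x t * pdx (zc zb H l α) x t) :=
  stmt12_general N l hl zb H hzb hH hHpos u hu
end
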